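/- Assume c < b in Γ. Then in the Hecke algebra of the affine Weyl group of type C̃2 one has C_0 C_{101} = C_{0101}, where 0101 = s0 s1 s0 s1 = s1 s0 s1 s0 (these are equal by the braid relation (s0 s1)⁴ = e). -/

import Mathlib

open scoped Classical TensorProduct

noncomputable section

namespace KL

variable (Γ : Type) [AddCommGroup Γ] [LinearOrder Γ] [IsOrderedAddMonoid Γ]

/-- The group ring `A = ℤ[Γ]`. -/
abbrev A := AddMonoidAlgebra ℤ Γ

variable {Γ}

/-- The basis element `q^γ` of `A`. -/
def qe (γ : Γ) : A Γ := AddMonoidAlgebra.single γ 1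

/-- `A_{<0}`: the ℤ-span of the `q^γ` with `γ < 0`, i.e. elements supported in negative degrees. -/
def Alt0 (Γ : Type) [AddCommGroup Γ] [LinearOrder Γ] [IsOrderedAddMonoid Γ] : Set (A Γ) :=
  {a : A Γ | ∀ γ ∈ a.coeff.support, γ < 0}

/-- The degree of an element of `A` (`⊥` for `0`). -/
def adeg (a : A Γ) : WithBot Γ := a.coeff.support.max

variable {B W : Type} [Group W] {M : CoxeterMatrix B}
variable {H : Type} [Ring H]

/-- Bundled data of a Coxeter system `(W,S)` together with a positive weight function `L`,
its Hecke algebra `H` over `A = ℤ[Γ]` with standard basis `T`, the bar involution, and the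
Kazhdan-Lusztig basis `C`. -/
structure KLData (M : CoxeterMatrix B) (W : Type) [Group W] (Γ : Type)
    [AddCommGroup Γ] [LinearOrder Γ] [IsOrderedAddMonoid Γ] (H : Type) [Ring H] [Algebra (A Γ) H] where
  /-- the Coxeter system -/
  cs : CoxeterSystem M W
  /-- the weight function -/
  L : W → Γ
  L_add : ∀ w w' : W, cs.length (w * w') = cs.length w + cs.length w' →
    L (w * w') = L w + L w'
  L_pos : ∀ w : W, w ≠ 1 → 0 < L w
  /-- the standard basis `T_w` of the Hecke algebra -/
  bT : Module.Basis W (A Γ) H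
  T_mul : ∀ w w' : W, cs.length (w * w') = cs.length w + cs.length w' →
    bT w * bT w' = bT (w * w')
  T_quad : ∀ i : B,
    (bT (cs.simple i) + algebraMap (A Γ) H (qe (-(L (cs.simple i))))) *
      (bT (cs.simple i) - algebraMap (A Γ) H (qe (L (cs.simple i)))) = 0
  /-- the bar involution -/
  bar : H →+* H
  bar_bar : ∀ h : H, bar (bar h) = h
  bar_q : ∀ γ : Γ, bar (algebraMap (A Γ) H (qe γ)) = algebraMap (A Γ) H (qe (-γ))
  bar_T : ∀ w : W, bar (bT w) * bT w⁻¹ = 1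
  bar_T' : ∀ w : W, bT w⁻¹ * bar (bT w) = 1
  /-- the Kazhdan-Lusztig basis `C_w` -/
  bC : Module.Basis W (A Γ) H
  bar_C : ∀ w : W, bar (bC w) = bC w
  C_mod : ∀ w v : W, bT.repr (bC w - bT w) v ∈ Alt0 Γ

namespace KLData

variable [Algebra (A Γ) H] (d : KLData M W Γ H)

/-- `T_w` -/
def T (w : W) : H := d.bT w

/-- `C_w` -/
def C (w : W) : H := d.bC w

/-- `H_{<0} = ⊕_w A_{<0} T_w`. -/
def Hlt0 : Set H := {h : H | ∀ w : W, d.bT.repr h w ∈ Alt0 Γ}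

/-- The structure constants `h_{x,y,z}` of the KL basis. -/
def hk (x y z : W) : A Γ := d.bC.repr (d.C x * d.C y) z

/-- One step of the preorder `≤_L` : `x` appears in `C_z C_y` for some `z`. -/
def leLstep (x y : W) : Prop := ∃ z : W, d.bC.repr (d.C z * d.C y) x ≠ 0

/-- The preorder `≤_L`. -/
def leL : W → W → Prop := Relation.ReflTransGen d.leLstep

/-- `x ~_L y` -/
def simL (x y : W) : Prop := d.leL x y ∧ d.leL y x

/-- `x ≤_R y` -/
def leR (x y : W) : Prop := d.leL x⁻¹ y⁻¹

/-- `x ~_R y` -/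
def simR (x y : W) : Prop := d.simL x⁻¹ y⁻¹

/-- The preorder `≤_LR`, generated by `≤_L` and `≤_R`. -/
def leLR : W → W → Prop :=
  Relation.ReflTransGen (fun x y => d.leLstep x y ∨ d.leLstep x⁻¹ y⁻¹)

/-- `x ~_LR y` -/
def simLR (x y : W) : Prop := d.leLR x y ∧ d.leLR y x

/-- left cells -/
def IsLeftCell (Θ : Set W) : Prop := ∃ x : W, Θ = {y | d.simL x y}

/-- right cells -/
def IsRightCell (Φ : Set W) : Prop := ∃ x : W, Φ = {y | d.simR x y}

/-- two-sided cells -/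
def IsTwoSidedCell (c : Set W) : Prop := ∃ x : W, c = {y | d.simLR x y}

/-- `z < c` for a two-sided cell `c`. -/
def ltc (c : Set W) (z : W) : Prop := z ∉ c ∧ ∀ w ∈ c, d.leLR z w

/-- `z ≤ c` for a two-sided cell `c`. -/
def lec (c : Set W) (z : W) : Prop := ∀ w ∈ c, d.leLR z w

/-- The ideal `H_{<c}`, spanned by the `C_z` with `z < c`. -/
def Hltc (c : Set W) : Submodule (A Γ) H :=
  Submodule.span (A Γ) (d.C '' {z : W | d.ltc c z})

/-- Bruhat order on `W`. -/
def bruhatLE : W → W → Prop :=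
  Relation.ReflTransGen (fun x y => ∃ t : W, d.cs.IsReflection t ∧ y = x * t ∧
    d.cs.length x < d.cs.length y)

/-- Strict Bruhat order on `W`. -/
def bruhatLT (x y : W) : Prop := d.bruhatLE x y ∧ x ≠ y

/-- Duflo order: `x ≤_D y` iff `l(x⁻¹y) = l(y) - l(x)`. -/
def dufloLE (x y : W) : Prop :=
  d.cs.length x + d.cs.length (x⁻¹ * y) = d.cs.length y

/-- The `A`-linear anti-automorphism `♭` of `H` with `T_w ↦ T_{w⁻¹}`. -/
def flat : H →ₗ[A Γ] H := d.bT.constr ℕ (fun w => d.bT w⁻¹)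

/-- `P_{e,z}` : the coefficient of `T_e` in `C_z`. -/
def Pel (z : W) : A Γ := d.bT.repr (d.C z) 1

/-- `Δ(z)`, defined by `P_{e,z} = n_z q^{-Δ(z)} + lower degree terms`. -/
def Del (z : W) : Γ := -((d.Pel z).coeff.support.max.unbotD 0)

/-- `n_z`, defined by `P_{e,z} = n_z q^{-Δ(z)} + lower degree terms`. -/
def nz (z : W) : ℤ := (d.Pel z).coeff (-(d.Del z))

/-- `af : W → Γ` is Lusztig's `a`-function iff for each `z`, `af z` is the (attained)
supremum of the degrees of the `h_{x,y,z}`. -/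
def IsAFunction (af : W → Γ) : Prop :=
  ∀ z : W, (∀ x y : W, adeg (d.hk x y z) ≤ (af z : WithBot Γ)) ∧
    (∃ x y : W, adeg (d.hk x y z) = (af z : WithBot Γ))

/-- `γ_{x,y,z}` : the coefficient of `q^{a(z⁻¹)}` in `h_{x,y,z⁻¹}`. -/
def gam (af : W → Γ) (x y z : W) : ℤ := (d.hk x y z⁻¹).coeff (af z⁻¹)

/-- The set `𝒟 = {z | a(z) = Δ(z)}`. -/
def Dset (af : W → Γ) : Set W := {z : W | af z = d.Del z}

end KLData

variable [Algebra (A Γ) H]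

/-- Assumption (*): a two-sided cell `c` equipped with subsets `D ⊆ c` and
`B_d, U_d ⊆ W` (`d ∈ D`) satisfying conditions (ia)-(iv). -/
structure CellDecomp (d : KLData M W Γ H) (c : Set W) where
  isCell : d.IsTwoSidedCell c
  D : Set W
  Bd : W → Set W
  Ud : W → Set W
  D_sub : D ⊆ c
  -- (ia) : c = c⁻¹ = ⊔_{d ∈ D} B_d d U_d (disjoint union)
  c_inv : ∀ w : W, w ∈ c ↔ w⁻¹ ∈ c
  c_eq : c = ⋃ d0 ∈ D, {w : W | ∃ b ∈ Bd d0, ∃ u ∈ Ud d0, w = b * d0 * u}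
  disj : ∀ d1 ∈ D, ∀ d2 ∈ D, d1 ≠ d2 →
    Disjoint {w : W | ∃ b ∈ Bd d1, ∃ u ∈ Ud d1, w = b * d1 * u}
             {w : W | ∃ b ∈ Bd d2, ∃ u ∈ Ud d2, w = b * d2 * u}
  -- (ib)
  len_add : ∀ d0 ∈ D, ∀ b ∈ Bd d0, ∀ u ∈ Ud d0,
    d.cs.length (b * d0 * u) = d.cs.length b + d.cs.length d0 + d.cs.length u
  -- (ic)
  one_mem_B : ∀ d0 ∈ D, (1 : W) ∈ Bd d0
  one_mem_U : ∀ d0 ∈ D, (1 : W) ∈ Ud d0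
  Binv_sub_U : ∀ d0 ∈ D, ∀ b ∈ Bd d0, b⁻¹ ∈ Ud d0
  -- (id)
  not_mem_c : ∀ d0 ∈ D, ∀ w : W, w ∉ Ud d0 →
    (∀ i : B, d.bruhatLE (d.cs.simple i) d0 →
      d.cs.length (d.cs.simple i * w) = d.cs.length w + 1) → d0 * w ∉ c
  -- (iia) : each d ∈ D is an involution in a finite parabolic subgroup
  d_inv : ∀ d0 ∈ D, d0 * d0 = 1 ∧ d0 ≠ 1
  d_parabolic : ∀ d0 ∈ D, ∃ I : Set B,
    (Subgroup.closure (d.cs.simple '' I) : Set W).Finite ∧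
    d0 ∈ Subgroup.closure (d.cs.simple '' I)
  s_len : ∀ d0 ∈ D, ∀ i : B, d.bruhatLE (d.cs.simple i) d0 →
    ∀ u ∈ Ud d0, d.cs.length (d.cs.simple i * u) = d.cs.length u + 1
  -- (iib)
  TsC : ∀ d0 ∈ D, ∀ i : B, d.bruhatLE (d.cs.simple i) d0 →
    ∃ a : A Γ, d.T (d.cs.simple i) * d.C d0 - a • d.C d0 ∈ d.Hltc c
  -- (iic)
  h_ne : ∀ d0 ∈ D, d.hk d0 d0 d0 ≠ 0
  -- (iii)
  dU_rightCell : ∀ d0 ∈ D, d.IsRightCell {w : W | ∃ u ∈ Ud d0, w = d0 * u}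
  -- (iv)
  TCT : ∀ d0 ∈ D, ∀ b ∈ Bd d0, ∀ u ∈ Ud d0,
    ∃ h0 ∈ d.Hlt0, ∃ h1 ∈ d.Hltc c,
      d.T b * d.C d0 * d.T u - d.T (b * d0 * u) = h0 + h1

namespace CellDecomp

variable {d : KLData M W Γ H} {c : Set W} (cd : CellDecomp d c)

/-- `F` is the element `F_w` : `F = T_w + Σ_{y ∈ U_d, y < w} p_{y,w} T_y` with
`p_{y,w} ∈ A_{<0}`, and `C_d F ≡ C_{dw} mod H_{<c}`. -/
def IsF (d0 w : W) (F : H) : Prop :=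
  (d.bT.repr F w = 1 ∧
    ∀ y : W, y ≠ w → d.bT.repr F y ≠ 0 →
      y ∈ cd.Ud d0 ∧ d.bruhatLT y w ∧ d.bT.repr F y ∈ Alt0 Γ) ∧
  d.C d0 * F - d.C (d0 * w) ∈ d.Hltc c

/-- The right cell `Φ_{b,d} = b d U_d`. -/
def Phi (b d0 : W) : Set W := {x : W | ∃ u ∈ cd.Ud d0, x = b * d0 * u}

/-- The left cell `Θ_{b,d} = Φ_{b,d}⁻¹`. -/
def Theta (b d0 : W) : Set W := {x : W | ∃ u ∈ cd.Ud d0, x = u⁻¹ * d0 * b⁻¹}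

end CellDecomp

/-- The Coxeter matrix of affine type C̃2: generators `s0 s1 s2`,
`(s0 s1)⁴ = (s1 s2)⁴ = (s0 s2)² = 1`. -/
def Ct2 : CoxeterMatrix (Fin 3) where
  M := !![1, 4, 2; 4, 1, 4; 2, 4, 1]
  isSymm := by decide
  diagonal := by decide
  off_diagonal := by intro i i' h; fin_cases i <;> fin_cases i' <;> simp_all

/-- The Coxeter matrix of affine type G̃2: generators `s0 s1 s2`,
`(s0 s1)³ = (s1 s2)⁶ = (s0 s2)² = 1`. -/
def Gt2 : CoxeterMatrix (Fin 3) where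
  M := !![1, 3, 2; 3, 1, 6; 2, 6, 1]
  isSymm := by decide
  diagonal := by decide
  off_diagonal := by intro i i' h; fin_cases i <;> fin_cases i' <;> simp_all

/-- `ξ_γ = q^γ - q^{-γ}`. -/
def xi (γ : Γ) : A Γ := qe γ - qe (-γ)

/-- `η_γ = q^γ + q^{-γ}`. -/
def eta (γ : Γ) : A Γ := qe γ + qe (-γ)

namespace KLData

variable [Algebra (A Γ) H] (d : KLData M W Γ H)

/-- The free `A ⊗_ℤ A`-module with basis `{E_w : w ∈ c}`. -/
abbrev Emod (Γ : Type) [AddCommGroup Γ] [LinearOrder Γ] [IsOrderedAddMonoid Γ] {W : Type} (c : Set W) :=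
  ↥c →₀ (A Γ ⊗[ℤ] A Γ)

/-- `C_x ⬝ E_w = Σ_{z ∈ c} (h_{x,w,z} ⊗ 1) E_z`. -/
def lactB (c : Set W) (x : W) (w : ↥c) : Emod Γ c :=
  Finsupp.mapRange (fun a => a ⊗ₜ[ℤ] (1 : A Γ)) (by simp)
    ((d.bC.repr (d.C x * d.C (w : W))).subtypeDomain (· ∈ c))

/-- The left action of `C_x` on `E`, extended `(A ⊗ A)`-linearly from the basis. -/
def lact (c : Set W) (x : W) (v : Emod Γ c) : Emod Γ c :=
  v.sum fun w t => t • d.lactB c x w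

/-- `E_w ⬝ C_y = Σ_{z ∈ c} (1 ⊗ h_{w,y,z}) E_z`. -/
def ractB (c : Set W) (y : W) (w : ↥c) : Emod Γ c :=
  Finsupp.mapRange (fun a => (1 : A Γ) ⊗ₜ[ℤ] a) (by simp)
    ((d.bC.repr (d.C (w : W) * d.C y)).subtypeDomain (· ∈ c))

/-- The right action of `C_y` on `E`, extended `(A ⊗ A)`-linearly from the basis. -/
def ract (c : Set W) (y : W) (v : Emod Γ c) : Emod Γ c :=
  v.sum fun w t => t • d.ractB c y w

end KLData

end KL

namespace KL

section GroupRing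

variable {Γ : Type} [AddCommGroup Γ]

theorem qe_mul (γ δ : Γ) : (qe γ : A Γ) * qe δ = qe (γ + δ) := by
  simp [qe, AddMonoidAlgebra.single_mul_single]

theorem qe_zero : (qe 0 : A Γ) = 1 := rfl

def barA : A Γ ≃+ A Γ :=
  AddMonoidAlgebra.coeffAddEquiv.trans
    ((Finsupp.domCongr (Equiv.neg Γ)).trans AddMonoidAlgebra.coeffAddEquiv.symm)

theorem coeff_barA (x : A Γ) (γ : Γ) : (barA x).coeff γ = x.coeff (-γ) := rfl

theorem barA_qe (γ : Γ) : barA (qe γ : A Γ) = qe (-γ) := by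
  apply AddMonoidAlgebra.coeff_injective
  ext δ
  simp only [coeff_barA, qe, AddMonoidAlgebra.coeff_single, Finsupp.single_apply, neg_eq_iff_eq_neg]

theorem barA_eta (γ : Γ) : barA (eta γ) = eta γ := by
  rw [eta, map_add, barA_qe, barA_qe, neg_neg, add_comm]

variable [LinearOrder Γ]

theorem exists_max_coeff {W : Type} {p : W →₀ A Γ} (hp : p ≠ 0) :
    ∃ z γ, (p z).coeff γ ≠ 0 ∧ ∀ z' α, (p z').coeff α ≠ 0 → α ≤ γ := by
  set S := p.support.biUnion fun z => (p z).coeff.support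
  obtain ⟨z, hz⟩ := Finsupp.ne_iff.mp hp
  have hS : S.Nonempty := by
    obtain ⟨γ, hγ⟩ :=
      Finsupp.support_nonempty_iff.mpr (mt AddMonoidAlgebra.coeff_eq_zero.mp hz)
    exact ⟨γ, Finset.mem_biUnion.mpr ⟨z, Finsupp.mem_support_iff.mpr hz, hγ⟩⟩
  obtain ⟨z0, -, hz0⟩ := Finset.mem_biUnion.mp (S.max'_mem hS)
  refine ⟨z0, S.max' hS, Finsupp.mem_support_iff.mp hz0, fun z' α hα => S.le_max' α ?_⟩
  have hz' : p z' ≠ 0 := fun h => hα (by rw [h]; rfl)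
  exact Finset.mem_biUnion.mpr
    ⟨z', Finsupp.mem_support_iff.mpr hz', Finsupp.mem_support_iff.mpr hα⟩

variable [IsOrderedAddMonoid Γ]

theorem Alt0_add {x y : A Γ} (hx : x ∈ Alt0 Γ) (hy : y ∈ Alt0 Γ) : x + y ∈ Alt0 Γ := by
  intro γ hγ
  rcases Finset.mem_union.mp (Finsupp.support_add hγ) with h | h
  exacts [hx _ h, hy _ h]

theorem Alt0_neg {x : A Γ} (hx : x ∈ Alt0 Γ) : -x ∈ Alt0 Γ := by
  intro γ hγ
  rw [AddMonoidAlgebra.coeff_neg, Finsupp.support_neg] at hγ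
  exact hx γ hγ

theorem Alt0_sub {x y : A Γ} (hx : x ∈ Alt0 Γ) (hy : y ∈ Alt0 Γ) : x - y ∈ Alt0 Γ := by
  rw [sub_eq_add_neg]
  exact Alt0_add hx (Alt0_neg hy)

theorem qe_mem_Alt0 {γ : Γ} (h : γ < 0) : (qe γ : A Γ) ∈ Alt0 Γ := by
  intro δ hδ
  rw [Finset.mem_singleton.mp (Finsupp.support_single_subset hδ)]
  exact h

theorem coeff_mul_eq_zero_of_mem_Alt0 {x y : A Γ} {γ : Γ}
    (hx : ∀ α, x.coeff α ≠ 0 → α ≤ γ) (hy : y ∈ Alt0 Γ) : (x * y).coeff γ = 0 := by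
  rw [AddMonoidAlgebra.coeff_mul]
  refine Finset.sum_eq_zero fun α hα => Finset.sum_eq_zero fun β hβ => if_neg (ne_of_lt ?_)
  calc α + β < α := add_lt_of_neg_right α (hy β hβ)
    _ ≤ γ := hx α (Finsupp.mem_support_iff.mp hα)

end GroupRing

namespace KLData

variable {B W : Type} [Group W] {M : CoxeterMatrix B} {H : Type} [Ring H]
  {Γ : Type} [AddCommGroup Γ] [LinearOrder Γ] [IsOrderedAddMonoid Γ] [Algebra (A Γ) H]
  (d : KLData M W Γ H)

theorem bar_algebraMap (a : A Γ) :
    d.bar (algebraMap (A Γ) H a) = algebraMap (A Γ) H (barA a) := by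
  induction a using AddMonoidAlgebra.induction_linear with
  | zero => simp
  | add f g hf hg => simp [hf, hg]
  | single γ n =>
      have h : (AddMonoidAlgebra.single γ n : A Γ) = n • qe γ := by
        simp [qe, AddMonoidAlgebra.smul_single]
      rw [h, map_zsmul, map_zsmul, map_zsmul, d.bar_q, barA_qe, map_zsmul]

theorem bar_smul (a : A Γ) (x : H) : d.bar (a • x) = barA a • d.bar x := by
  rw [Algebra.smul_def, map_mul, bar_algebraMap, Algebra.smul_def]

theorem barA_repr_C_of_bar_eq {h : H} (hh : d.bar h = h) (z : W) :
    barA (d.bC.repr h z) = d.bC.repr h z := by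
  set p := d.bC.repr h
  have hbar : d.bar h = Finsupp.linearCombination (A Γ) d.bC (p.mapRange barA barA.map_zero) := by
    conv_lhs => rw [← d.bC.linearCombination_repr h]
    rw [Finsupp.linearCombination_apply, Finsupp.linearCombination_apply,
      Finsupp.sum_mapRange_index (by simp), Finsupp.sum, Finsupp.sum, map_sum]
    exact Finset.sum_congr rfl fun z _ => by rw [bar_smul, d.bar_C]
  have := congrArg (fun x => d.bC.repr x z) (hbar.symm.trans hh)
  simpa only [Module.Basis.repr_linearCombination, Finsupp.mapRange_apply] using this

theorem coeff_repr_T_eq_coeff_repr_C (h : H) {γ : Γ}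
    (hγ : ∀ z α, (d.bC.repr h z).coeff α ≠ 0 → α ≤ γ) (w : W) :
    (d.bT.repr h w).coeff γ = (d.bC.repr h w).coeff γ := by
  have hterm : ∀ z, d.bT.repr (d.bC.repr h z • d.bC z) w =
      d.bC.repr h z * d.bT.repr (d.bC z - d.bT z) w + if z = w then d.bC.repr h z else 0 := by
    intro z
    rw [map_smul, Finsupp.smul_apply, smul_eq_mul, map_sub, Finsupp.sub_apply,
      Module.Basis.repr_self, Finsupp.single_apply]
    split_ifs <;> ring
  conv_lhs => rw [← d.bC.linearCombination_repr h]
  rw [Finsupp.linearCombination_apply, Finsupp.sum, map_sum, Finsupp.finsetSum_apply]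
  simp only [hterm, Finset.sum_add_distrib, AddMonoidAlgebra.coeff_add, Finsupp.add_apply,
    AddMonoidAlgebra.coeff_sum, Finsupp.finsetSum_apply,
    coeff_mul_eq_zero_of_mem_Alt0 (hγ _) (d.C_mod _ w), Finset.sum_const_zero, zero_add,
    Finset.sum_ite_eq', Finsupp.mem_support_iff]
  split_ifs with hw
  · rfl
  · rw [not_not.mp hw]

/-- Let `γ` be the top degree among the `C`-coordinates of `h`. Bar invariance makes `γ ≥ 0`,
while `C_z ≡ T_z mod H_{<0}` makes the `T`-coordinates of `h` agree with its `C`-coordinates in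
degree `γ`. -/
theorem eq_zero_of_bar_eq_of_mem_Hlt0 {h : H} (hbar : d.bar h = h) (hlt : h ∈ d.Hlt0) :
    h = 0 := by
  by_contra hne
  obtain ⟨z, γ, hzγ, hmax⟩ := exists_max_coeff (d.bC.repr.map_ne_zero_iff.mpr hne)
  have hγ : 0 ≤ γ := by
    have hsymm := coeff_barA (d.bC.repr h z) γ
    rw [barA_repr_C_of_bar_eq d hbar] at hsymm
    exact neg_le_self_iff.mp (hmax z (-γ) (hsymm ▸ hzγ))
  rw [← coeff_repr_T_eq_coeff_repr_C d h hmax] at hzγ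
  exact (hlt z γ (Finsupp.mem_support_iff.mpr hzγ)).not_ge hγ

theorem C_eq_of_bar_eq {w : W} {X : H} (hbar : d.bar X = X) (hX : X - d.T w ∈ d.Hlt0) :
    d.C w = X := by
  refine sub_eq_zero.mp (d.eq_zero_of_bar_eq_of_mem_Hlt0 (by rw [map_sub, C, d.bar_C, hbar]) ?_)
  intro v
  have hdec : d.C w - X = (d.bC w - d.bT w) - (X - d.T w) := by simp only [C, T]; abel
  rw [hdec, map_sub, Finsupp.sub_apply]
  exact Alt0_sub (d.C_mod w v) (hX v)

theorem add_mem_Hlt0 {x y : H} (hx : x ∈ d.Hlt0) (hy : y ∈ d.Hlt0) : x + y ∈ d.Hlt0 :=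
  fun w => by rw [map_add, Finsupp.add_apply]; exact Alt0_add (hx w) (hy w)

theorem T_one : d.T 1 = 1 := by
  have hidem : d.T 1 * d.T 1 = d.T 1 := by simpa [T] using d.T_mul 1 1 (by simp)
  have hinv : d.bar (d.T 1) * d.T 1 = 1 := by simpa [T] using d.bar_T 1
  calc d.T 1 = d.bar (d.T 1) * (d.T 1 * d.T 1) := by rw [← mul_assoc, hinv, one_mul]
    _ = 1 := by rw [hidem, hinv]

theorem smul_T_mem_Hlt0 {a : A Γ} (ha : a ∈ Alt0 Γ) (w : W) : a • d.T w ∈ d.Hlt0 := by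
  intro v
  rw [map_smul, T, Module.Basis.repr_self, Finsupp.smul_apply, Finsupp.single_apply]
  split_ifs
  · simpa using ha
  · intro γ hγ
    simp at hγ

theorem smul_one_mem_Hlt0 {a : A Γ} (ha : a ∈ Alt0 Γ) : a • (1 : H) ∈ d.Hlt0 :=
  d.T_one ▸ d.smul_T_mem_Hlt0 ha 1

variable {s t : W} {b c : Γ}

theorem T_mul_self_of_length_eq_one (hs : d.cs.length s = 1) :
    d.T s * d.T s = 1 + xi (d.L s) • d.T s := by
  obtain ⟨i, rfl⟩ := d.cs.length_eq_one_iff.mp hs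
  have hq := d.T_quad i
  set L := d.L (d.cs.simple i)
  have hunit : algebraMap (A Γ) H (qe (-L)) * algebraMap (A Γ) H (qe L) = 1 := by
    rw [← map_mul, qe_mul, neg_add_cancel, qe_zero, map_one]
  rw [add_mul, mul_sub, mul_sub, hunit, ← Algebra.commutes, ← Algebra.smul_def,
    ← Algebra.smul_def] at hq
  rw [xi, sub_smul]
  exact eq_of_sub_eq_zero (by rw [← hq]; simp only [T]; abel)

theorem bar_T_of_length_eq_one (hs : d.cs.length s = 1) :
    d.bar (d.T s) = d.T s - xi (d.L s) • 1 := by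
  have hleft : d.bar (d.T s) * d.T s = 1 := by
    obtain ⟨i, rfl⟩ := d.cs.length_eq_one_iff.mp hs
    simpa only [T, d.cs.inv_simple] using d.bar_T (d.cs.simple i)
  have hright : d.T s * (d.T s - xi (d.L s) • 1) = 1 := by
    rw [mul_sub, d.T_mul_self_of_length_eq_one hs, mul_smul_comm, mul_one, add_sub_cancel_right]
  exact left_inv_eq_right_inv hleft hright

theorem neg_L_lt_zero (hs : d.cs.length s = 1) : -d.L s < 0 :=
  neg_neg_of_pos (d.L_pos s (by rintro rfl; simp at hs))

theorem C_of_length_eq_one (hs : d.cs.length s = 1) : d.C s = d.T s + qe (-d.L s) • 1 := by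
  refine d.C_eq_of_bar_eq ?_ ?_
  · rw [map_add, d.bar_T_of_length_eq_one hs, bar_smul, barA_qe, map_one, neg_neg, xi, sub_smul]
    abel
  · rw [add_sub_cancel_left]
    exact d.smul_one_mem_Hlt0 (qe_mem_Alt0 (d.neg_L_lt_zero hs))

theorem C_tst_eq (hs : d.cs.length s = 1) (ht : d.cs.length t = 1)
    (htst : d.cs.length (t * s * t) = 3) (hLs : d.L s = c) (hLt : d.L t = b) (hcb : c < b) :
    d.C (t * s * t) = d.T (t * s * t) + (qe (-b) • d.T (s * t) + qe (-b) • d.T (t * s)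
      + (qe (-c + -b) - qe (c - b)) • d.T t + qe (-b + -b) • d.T s
      + (qe (-c + -b + -b) - qe (c - b + -b)) • 1) := by
  have l1 := d.cs.length_mul_le (t * s) t
  have l2 := d.cs.length_mul_le t (s * t)
  have l3 := d.cs.length_mul_le t s
  have l4 := d.cs.length_mul_le s t
  rw [← mul_assoc] at l2
  have hts : d.T t * d.T s = d.T (t * s) := d.T_mul t s (by omega)
  have hst : d.T s * d.T t = d.T (s * t) := d.T_mul s t (by omega)
  have htst' : d.T (t * s) * d.T t = d.T (t * s * t) := d.T_mul (t * s) t (by omega)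
  have hexp : d.C t * d.C s * d.C t - eta (b - c) • d.C t = d.T (t * s * t)
      + (qe (-b) • d.T (s * t) + qe (-b) • d.T (t * s)
      + (qe (-c + -b) - qe (c - b)) • d.T t + qe (-b + -b) • d.T s
      + (qe (-c + -b + -b) - qe (c - b + -b)) • 1) := by
    rw [d.C_of_length_eq_one hs, d.C_of_length_eq_one ht, hLs, hLt]
    simp only [mul_add, add_mul, smul_mul_assoc, mul_smul_comm, one_mul, mul_one,
      hts, hst, htst', d.T_mul_self_of_length_eq_one ht, hLt, xi, eta]
    match_scalars <;> simp only [qe_mul, mul_one, mul_sub, mul_add, add_mul] <;> abel_nf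
  rw [← hexp]
  refine d.C_eq_of_bar_eq ?_ ?_
  · rw [map_sub, map_mul, map_mul, bar_smul, barA_eta]
    simp only [C, d.bar_C]
  · have hb : -b < 0 := hLt ▸ d.neg_L_lt_zero ht
    have hc : -c < 0 := hLs ▸ d.neg_L_lt_zero hs
    -- `c < b` is exactly what puts the coefficient `q^{c-b}` of `η_{b-c}` into `A_{<0}`.
    have hcb' : c - b < 0 := sub_neg.mpr hcb
    rw [hexp, add_sub_cancel_left]
    refine d.add_mem_Hlt0 (d.add_mem_Hlt0 (d.add_mem_Hlt0 (d.add_mem_Hlt0 ?_ ?_) ?_) ?_) ?_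
    all_goals first | apply d.smul_T_mem_Hlt0 | apply d.smul_one_mem_Hlt0
    all_goals try apply Alt0_sub
    all_goals apply qe_mem_Alt0
    all_goals repeat' first | assumption | apply add_neg

theorem C_mul_C_tst (hs : d.cs.length s = 1) (ht : d.cs.length t = 1)
    (hstst : d.cs.length (s * t * s * t) = 4) (hLs : d.L s = c) (hLt : d.L t = b) (hcb : c < b) :
    d.C s * d.C (t * s * t) = d.C (s * t * s * t) := by
  have l1 := d.cs.length_mul_le s (t * s * t)
  have l2 := d.cs.length_mul_le (s * t * s) t
  have l3 := d.cs.length_mul_le (s * t) s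
  have l4 := d.cs.length_mul_le (t * s) t
  have l5 := d.cs.length_mul_le s t
  have l6 := d.cs.length_mul_le t s
  simp only [← mul_assoc] at l1
  have htst : d.cs.length (t * s * t) = 3 := by omega
  have hst : d.T s * d.T t = d.T (s * t) := d.T_mul s t (by omega)
  have hsts : d.T s * d.T (t * s) = d.T (s * t * s) := by
    have h := d.T_mul s (t * s) (by rw [← mul_assoc]; omega)
    rwa [← mul_assoc] at h
  have hstst : d.T s * d.T (t * s * t) = d.T (s * t * s * t) := by
    have h := d.T_mul s (t * s * t) (by simp only [← mul_assoc]; omega)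
    simp only [← mul_assoc] at h
    exact h
  have hsst : d.T s * d.T (s * t) = d.T t + xi c • d.T (s * t) := by
    rw [← hst, ← mul_assoc, d.T_mul_self_of_length_eq_one hs, hLs, add_mul, one_mul,
      smul_mul_assoc]
  have hexp : d.C s * d.C (t * s * t) = d.T (s * t * s * t) + (qe (-c) • d.T (t * s * t)
      + qe (-b) • d.T (s * t * s) + qe (-c + -b) • d.T (s * t) + qe (-c + -b) • d.T (t * s)
      + qe (-c + -b + -c) • d.T t + qe (-c + -b + -b) • d.T s
      + qe (-c + -b + -b + -c) • 1) := by
    rw [d.C_tst_eq hs ht htst hLs hLt hcb, d.C_of_length_eq_one hs, hLs]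
    simp only [mul_add, add_mul, smul_mul_assoc, mul_smul_comm, one_mul, mul_one,
      hst, hsts, hstst, hsst, d.T_mul_self_of_length_eq_one hs, hLs, xi]
    match_scalars <;> simp only [qe_mul, mul_one, mul_sub, sub_mul, mul_add] <;> abel_nf
  have hb : -b < 0 := hLt ▸ d.neg_L_lt_zero ht
  have hc : -c < 0 := hLs ▸ d.neg_L_lt_zero hs
  refine (d.C_eq_of_bar_eq (by rw [map_mul]; simp only [C, d.bar_C]) ?_).symm
  rw [hexp, add_sub_cancel_left]
  refine d.add_mem_Hlt0 (d.add_mem_Hlt0 (d.add_mem_Hlt0 (d.add_mem_Hlt0 (d.add_mem_Hlt0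
    (d.add_mem_Hlt0 ?_ ?_) ?_) ?_) ?_) ?_) ?_
  all_goals first | apply d.smul_T_mem_Hlt0 | apply d.smul_one_mem_Hlt0
  all_goals apply qe_mem_Alt0
  all_goals repeat' first | assumption | apply add_neg

end KLData

section AffineC2

open DihedralGroup

def simpleToD4 : Fin 3 → DihedralGroup 4 := ![sr 0, sr 1, sr 0]

theorem isLiftable_simpleToD4 : Ct2.IsLiftable simpleToD4 := by
  intro i i'
  fin_cases i <;> fin_cases i' <;> decide

/-- Word length in `DihedralGroup 4` with respect to `sr 0` and `sr 1`. -/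
def d4Length : DihedralGroup 4 → ℕ
  | .r k => if k = 0 then 0 else if k = 2 then 4 else 2
  | .sr k => if k = 0 ∨ k = 1 then 1 else 3

theorem d4Length_simpleToD4_mul_le (i : Fin 3) (x : DihedralGroup 4) :
    d4Length (simpleToD4 i * x) ≤ d4Length x + 1 := by
  revert i x
  decide

variable {W : Type} [Group W] (cs : CoxeterSystem Ct2 W)

theorem d4Length_lift_wordProd_le (ω : List (Fin 3)) :
    d4Length (cs.lift ⟨simpleToD4, isLiftable_simpleToD4⟩ (cs.wordProd ω)) ≤ ω.length := by
  induction ω with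
  | nil => rw [cs.wordProd_nil, map_one]; decide
  | cons i ω ih =>
    rw [cs.wordProd_cons, map_mul, cs.lift_apply_simple, List.length_cons]
    exact (d4Length_simpleToD4_mul_le i _).trans (Nat.add_le_add_right ih 1)

theorem length_s0s1s0s1 :
    cs.length (cs.simple 0 * cs.simple 1 * cs.simple 0 * cs.simple 1) = 4 := by
  refine le_antisymm ?_ ?_
  · refine (cs.length_mul_le _ _).trans ?_
    grw [cs.length_mul_le, cs.length_mul_le]
    simp
  · obtain ⟨ω, hω, hw⟩ :=
      cs.exists_isReduced (cs.simple 0 * cs.simple 1 * cs.simple 0 * cs.simple 1)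
    have hlen := d4Length_lift_wordProd_le cs ω
    rw [← hw] at hlen
    simp only [map_mul, cs.lift_apply_simple] at hlen
    rw [hw, hω.eq]
    exact le_of_eq_of_le (by decide) hlen

end AffineC2

end KL

open KL

theorem statement_15_general {W : Type} [Group W] {Γ : Type}
    [AddCommGroup Γ] [LinearOrder Γ] [IsOrderedAddMonoid Γ] {H : Type} [Ring H] [Algebra (A Γ) H] (d : KLData Ct2 W Γ H)
    (b c : Γ)
    (s0 s1 : W) (hs0 : s0 = d.cs.simple 0) (hs1 : s1 = d.cs.simple 1)
    (hL0 : d.L s0 = c) (hL1 : d.L s1 = b) (hcb : c < b) :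
    d.C s0 * d.C (s1 * s0 * s1) = d.C (s0 * s1 * s0 * s1) := by
  subst hs0 hs1
  exact d.C_mul_C_tst (d.cs.length_simple 0) (d.cs.length_simple 1) (length_s0s1s0s1 d.cs)
    hL0 hL1 hcb

/-- in type C̃2 with `c < b`, `C_0 C_{101} = C_{0101}`. -/
theorem statement_15 {W : Type} [Group W] {Γ : Type}
    [AddCommGroup Γ] [LinearOrder Γ] [IsOrderedAddMonoid Γ] {H : Type} [Ring H] [Algebra (A Γ) H] (d : KLData Ct2 W Γ H)
    (a b c : Γ) (ha : 0 < a) (hb : 0 < b) (hc : 0 < c)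
    (s0 s1 s2 : W) (hs0 : s0 = d.cs.simple 0) (hs1 : s1 = d.cs.simple 1)
    (hs2 : s2 = d.cs.simple 2)
    (hL0 : d.L s0 = c) (hL1 : d.L s1 = b) (hL2 : d.L s2 = a) (hcb : c < b) :
    d.C s0 * d.C (s1 * s0 * s1) = d.C (s0 * s1 * s0 * s1) :=
  statement_15_general d b c s0 s1 hs0 hs1 hL0 hL1 hcb
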